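/- arXiv:math/0401199 — 3 statements merged into one kernel-verified Lean document; each statement's English description precedes it below -/
import Mathlib

section
/- If a contract choice problem G satisfies the weak top coalition property, then the core of G is non-empty, i.e. there exists an outcome (f, v) for G that is not blocked by any coalition. -/
/-- An outcome for a contract choice problem with agent set `α` and feasible pay-off
sets `F S ⊆ ℝ^S` is a pair `(f, v)` where `f` is a partition of the agent set and
`v : α → ℝ` is a nonnegative pay-off function whose restriction to each cell `S ∈ f`
belongs to `F S`. -/
def IsOutcome {α : Type*} [Fintype α]
    (F : (S : Finset α) → Set ({a : α // a ∈ S} → ℝ))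
    (f : Finset (Finset α)) (v : α → ℝ) : Prop :=
  (∀ S ∈ f, S.Nonempty) ∧
  (∀ S ∈ f, ∀ T ∈ f, S ≠ T → Disjoint S T) ∧
  (∀ a : α, ∃ S ∈ f, a ∈ S) ∧
  (∀ a : α, 0 ≤ v a) ∧
  (∀ S ∈ f, (fun a : {a : α // a ∈ S} => v a.1) ∈ F S)

/-- A coalition `S` blocks the pay-off function `v` if `S` is nonempty and there is
`x ∈ F S` with `x a > v a` for all `a ∈ S`. -/
def Blocks {α : Type*}
    (F : (S : Finset α) → Set ({a : α // a ∈ S} → ℝ))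
    (S : Finset α) (v : α → ℝ) : Prop :=
  S.Nonempty ∧ ∃ x ∈ F S, ∀ a : {a : α // a ∈ S}, v a.1 < x a

/-- The outcome `(f, v)` has the weak top-coalition property for the nonempty subset `V`:
there is a nonempty `S ⊆ V` with `S ∈ f` and an (ordered) partition `P 0, …, P g` of `S`
such that (b) every agent in `P 0` weakly prefers `v` to anything achievable with a
coalition inside `V`, and (c) for `t ≥ 1`, if an agent of `P t` can strictly improve with
`T ∪ {a}`, `T ⊆ V \ {a}`, then `T` meets some earlier cell `P k`, `k < t`. -/
def HasWeakTopCoalitionFor {α : Type*} [DecidableEq α]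
    (F : (S : Finset α) → Set ({a : α // a ∈ S} → ℝ))
    (V : Finset α) (f : Finset (Finset α)) (v : α → ℝ) : Prop :=
  ∃ (S : Finset α) (g : ℕ) (P : Fin (g + 1) → Finset α),
    S.Nonempty ∧ S ⊆ V ∧ S ∈ f ∧
    (∀ i, (P i).Nonempty) ∧
    (∀ i j, i ≠ j → Disjoint (P i) (P j)) ∧
    (Finset.univ.biUnion P = S) ∧
    (∀ a ∈ P 0, ∀ T ⊆ V \ {a}, ∀ x ∈ F (insert a T),
      x ⟨a, Finset.mem_insert_self a T⟩ ≤ v a) ∧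
    (∀ t : Fin (g + 1), t ≠ 0 → ∀ a ∈ P t, ∀ T ⊆ V \ {a}, ∀ x ∈ F (insert a T),
      v a < x ⟨a, Finset.mem_insert_self a T⟩ →
      ∃ k : Fin (g + 1), k < t ∧ (T ∩ P k).Nonempty)

lemma cast_memF {α : Type*} {F : (S : Finset α) → Set ({a : α // a ∈ S} → ℝ)}
    {T E : Finset α} (h : E = T) {x : {a : α // a ∈ T} → ℝ} (hx : x ∈ F T) :
    (fun b : {b : α // b ∈ E} => x ⟨b.1, h ▸ b.2⟩) ∈ F E := by
  subst h; exact hx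

lemma aux_lemma {α : Type*} [DecidableEq α] [Fintype α]
    (F : (S : Finset α) → Set ({a : α // a ∈ S} → ℝ))
    (hWTC : ∀ V : Finset α, V.Nonempty →
      ∃ (f : Finset (Finset α)) (v : α → ℝ),
        ((∀ S ∈ f, S.Nonempty) ∧
         (∀ S ∈ f, ∀ T ∈ f, S ≠ T → Disjoint S T) ∧
         (∀ a : α, ∃ S ∈ f, a ∈ S) ∧
         (∀ a : α, 0 ≤ v a) ∧
         (∀ S ∈ f, (fun a : {a : α // a ∈ S} => v a.1) ∈ F S)) ∧
        ∃ (S : Finset α) (g : ℕ) (P : Fin (g + 1) → Finset α),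
          S.Nonempty ∧ S ⊆ V ∧ S ∈ f ∧
          (∀ i, (P i).Nonempty) ∧
          (∀ i j, i ≠ j → Disjoint (P i) (P j)) ∧
          (Finset.univ.biUnion P = S) ∧
          (∀ a ∈ P 0, ∀ T ⊆ V \ {a}, ∀ x ∈ F (insert a T),
            x ⟨a, Finset.mem_insert_self a T⟩ ≤ v a) ∧
          (∀ t : Fin (g + 1), t ≠ 0 → ∀ a ∈ P t, ∀ T ⊆ V \ {a}, ∀ x ∈ F (insert a T),
            v a < x ⟨a, Finset.mem_insert_self a T⟩ →
            ∃ k : Fin (g + 1), k < t ∧ (T ∩ P k).Nonempty)) :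
    ∀ V : Finset α, ∃ (f : Finset (Finset α)) (v : α → ℝ),
      (∀ S ∈ f, S.Nonempty) ∧
      (∀ S ∈ f, ∀ T ∈ f, S ≠ T → Disjoint S T) ∧
      (∀ a ∈ V, ∃ S ∈ f, a ∈ S) ∧
      (∀ S ∈ f, S ⊆ V) ∧
      (∀ a : α, 0 ≤ v a) ∧
      (∀ S ∈ f, (fun a : {a : α // a ∈ S} => v a.1) ∈ F S) ∧
      (∀ T ⊆ V, ¬ (T.Nonempty ∧ ∃ x ∈ F T, ∀ a : {a : α // a ∈ T}, v a.1 < x a)) := by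
  intro V
  induction V using Finset.strongInduction with
  | _ V ih =>
    rcases V.eq_empty_or_nonempty with hV | hV
    · subst hV
      refine ⟨∅, fun _ => 0, ?_, ?_, ?_, ?_, ?_, ?_, ?_⟩ <;>
        simp only [Finset.notMem_empty, false_implies, implies_true, le_refl]
      · intro T hT ⟨⟨a, haT⟩, _⟩
        exact Finset.notMem_empty a (hT haT)
    · obtain ⟨f₀, v₀, hout, S, g, P, hSne, hSV, hSf₀, hPne, hPdisj, hPU, hb, hc⟩ :=
        hWTC V hV
      obtain ⟨f', v', h1, h2, h3, h4, h5, h6, h7⟩ :=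
        ih (V \ S) (Finset.sdiff_ssubset hSV hSne)
      set v : α → ℝ := fun a => if a ∈ S then v₀ a else v' a with hv
      have hvS : ∀ a ∈ S, v a = v₀ a := fun a ha => if_pos ha
      have hvS' : ∀ a, a ∉ S → v a = v' a := fun a ha => if_neg ha
      refine ⟨insert S f', v, ?_, ?_, ?_, ?_, ?_, ?_, ?_⟩
      · intro T hT
        rcases Finset.mem_insert.1 hT with rfl | hT
        · exact hSne
        · exact h1 T hT
      · intro T₁ hT₁ T₂ hT₂ hne
        have hdS : ∀ T ∈ f', Disjoint S T := by
          intro T hT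
          rw [Finset.disjoint_left]
          intro b hbS hbT
          exact (Finset.mem_sdiff.1 (h4 T hT hbT)).2 hbS
        rcases Finset.mem_insert.1 hT₁ with rfl | hT₁ <;>
          rcases Finset.mem_insert.1 hT₂ with h | hT₂
        · exact absurd h.symm hne
        · exact hdS T₂ hT₂
        · rw [h]; exact (hdS T₁ hT₁).symm
        · exact h2 T₁ hT₁ T₂ hT₂ hne
      · intro a ha
        by_cases haS : a ∈ S
        · exact ⟨S, Finset.mem_insert_self _ _, haS⟩
        · obtain ⟨T, hT, haT⟩ := h3 a (Finset.mem_sdiff.2 ⟨ha, haS⟩)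
          exact ⟨T, Finset.mem_insert_of_mem hT, haT⟩
      · intro T hT
        rcases Finset.mem_insert.1 hT with rfl | hT
        · exact hSV
        · exact (h4 T hT).trans (Finset.sdiff_subset)
      · intro a
        by_cases haS : a ∈ S
        · rw [hvS a haS]; exact hout.2.2.2.1 a
        · rw [hvS' a haS]; exact h5 a
      · intro T hT
        rcases Finset.mem_insert.1 hT with rfl | hT
        · have : (fun a : {a : α // a ∈ T} => v a.1) = fun a => v₀ a.1 :=
            funext fun a => hvS a.1 a.2
          rw [this]; exact hout.2.2.2.2 T hSf₀
        · have : (fun a : {a : α // a ∈ T} => v a.1) = fun a => v' a.1 := by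
            funext a
            exact hvS' a.1 (Finset.mem_sdiff.1 (h4 T hT a.2)).2
          rw [this]; exact h6 T hT
      · rintro T hTV ⟨hTne, x, hx, hlt⟩
        by_cases hTS : (T ∩ S).Nonempty
        · -- find minimal index of a cell of P meeting T
          set J : Finset (Fin (g + 1)) :=
            Finset.univ.filter (fun i => (T ∩ P i).Nonempty) with hJ
          have hJne : J.Nonempty := by
            obtain ⟨a, haT⟩ := hTS
            have haS : a ∈ S := (Finset.mem_inter.1 haT).2
            rw [← hPU] at haS
            obtain ⟨i, _, hai⟩ := Finset.mem_biUnion.1 haS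
            exact ⟨i, Finset.mem_filter.2 ⟨Finset.mem_univ _,
              ⟨a, Finset.mem_inter.2 ⟨(Finset.mem_inter.1 haT).1, hai⟩⟩⟩⟩
          set t := J.min' hJne with htdef
          have htJ : t ∈ J := J.min'_mem hJne
          obtain ⟨a, haTP⟩ := (Finset.mem_filter.1 htJ).2
          have haT : a ∈ T := (Finset.mem_inter.1 haTP).1
          have haP : a ∈ P t := (Finset.mem_inter.1 haTP).2
          have haS : a ∈ S := by
            rw [← hPU]; exact Finset.mem_biUnion.2 ⟨t, Finset.mem_univ _, haP⟩
          have hins : insert a (T.erase a) = T := Finset.insert_erase haT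
          have hT₀ : T.erase a ⊆ V \ {a} := by
            intro b hb
            rw [Finset.mem_sdiff, Finset.mem_singleton]
            exact ⟨hTV (Finset.mem_of_mem_erase hb), (Finset.mem_erase.1 hb).1⟩
          have hmem : ∀ b : {b : α // b ∈ insert a (T.erase a)}, b.1 ∈ T :=
            fun b => (Finset.ext_iff.1 hins b.1).1 b.2
          have hx' : (fun b : {b : α // b ∈ insert a (T.erase a)} =>
              x ⟨b.1, hmem b⟩) ∈ F (insert a (T.erase a)) := cast_memF hins hx
          have key : v₀ a < (fun b : {b : α // b ∈ insert a (T.erase a)} =>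
              x ⟨b.1, hmem b⟩) ⟨a, Finset.mem_insert_self a (T.erase a)⟩ := by
            have := hlt ⟨a, haT⟩
            rw [hvS a haS] at this
            exact this
          by_cases ht0 : t = 0
          · have := hb a (ht0 ▸ haP) (T.erase a) hT₀ _ hx'
            linarith
          · obtain ⟨k, hkt, hkne⟩ := hc t ht0 a haP (T.erase a) hT₀ _ hx' key
            have hkJ : k ∈ J := by
              obtain ⟨b, hb⟩ := hkne
              refine Finset.mem_filter.2 ⟨Finset.mem_univ _, ⟨b, ?_⟩⟩
              rw [Finset.mem_inter] at hb ⊢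
              exact ⟨Finset.mem_of_mem_erase hb.1, hb.2⟩
            exact absurd (J.min'_le k hkJ) (not_le.2 hkt)
        · -- T disjoint from S: contradiction with IH
          have hTV' : T ⊆ V \ S := by
            intro b hb
            rw [Finset.mem_sdiff]
            refine ⟨hTV hb, fun hbS => hTS ⟨b, Finset.mem_inter.2 ⟨hb, hbS⟩⟩⟩
          refine h7 T hTV' ⟨hTne, x, hx, fun a => ?_⟩
          have := hlt a
          rwa [hvS' a.1 (Finset.mem_sdiff.1 (hTV' a.2)).2] at this

/-- **Theorem 1 (Lahiri).** If a contract choice problem satisfies the weak top coalition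
property (for every nonempty subset `V` of the agent set there is an outcome having the
weak top-coalition property for `V`), then its core is nonempty: there is an outcome
not blocked by any coalition. -/
theorem core_nonempty_of_weak_top_coalition
    {α : Type*} [DecidableEq α] [Fintype α] [Nonempty α]
    (F : (S : Finset α) → Set ({a : α // a ∈ S} → ℝ))
    (hFne : ∀ S : Finset α, S.Nonempty → (F S).Nonempty)
    (hFfin : ∀ S : Finset α, (F S).Finite)
    (hFsingle : ∀ a : α, F {a} = {fun _ => (0 : ℝ)})
    (hWTC : ∀ V : Finset α, V.Nonempty →
      ∃ (f : Finset (Finset α)) (v : α → ℝ),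
        IsOutcome F f v ∧ HasWeakTopCoalitionFor F V f v) :
    ∃ (f : Finset (Finset α)) (v : α → ℝ),
      IsOutcome F f v ∧ ∀ S : Finset α, ¬ Blocks F S v := by
  have hWTC' := hWTC
  obtain ⟨f, v, h1, h2, h3, h4, h5, h6, h7⟩ := aux_lemma F hWTC' Finset.univ
  refine ⟨f, v, ⟨h1, h2, fun a => h3 a (Finset.mem_univ a), h5, h6⟩, ?_⟩
  intro S hB
  exact h7 S (Finset.subset_univ S) ⟨hB.1, hB.2⟩
end

section
/- For the four-agent generalized matching problem G of Gale and Shapley defined below, the core of G is empty: every outcome of G admits a blocking coalition. -/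
/-- `C⁰(S)`: permutations `μ` of the agent set with `μ(S) = S` such that `μ(T) ≠ T`
for every nonempty proper subset `T` of `S`. -/
def C0 {α : Type*} [DecidableEq α] [Fintype α] (S : Finset α) :
    Set (Equiv.Perm α) :=
  {μ | Finset.image (⇑μ) S = S ∧
    ∀ T : Finset α, T.Nonempty → T ⊂ S → Finset.image (⇑μ) T ≠ T}

/-- The utilities of the four-agent Gale–Shapley example (agents `0,1,2,3` stand for
agents `1,2,3,4` of the paper): `u a b` is the monetary worth to agent `a` of the
object of agent `b`. -/
def u : Fin 4 → Fin 4 → ℝ :=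
  ![![0, 3, 2, 1], ![2, 0, 3, 1], ![3, 2, 0, 1], ![3, 2, 1, 0]]

/-- The feasible pay-off sets of the Gale–Shapley example: for coalitions of size 1 or 2,
the pay-offs induced by reallocations `μ ∈ C⁰(S)`; otherwise the single vector `-e^S`. -/
def Fgs (S : Finset (Fin 4)) : Set ({a : Fin 4 // a ∈ S} → ℝ) :=
  if S.card = 1 ∨ S.card = 2 then
    {x | ∃ μ ∈ C0 S, ∀ a : {a : Fin 4 // a ∈ S}, x a = u a.1 (μ a.1)}
  else
    {fun _ => -1}


/-! Cells of size `≥ 3` pay `-1`, and a permutation of at most two agents is an involution,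
so in every outcome each agent `a` has a partner `b` (possibly `a` itself) with `v a = u a b` and
`v b = u b a`. Agents `0, 1, 2` form a cycle, indexed by `Fin 3` so that `i + 1` wraps around,
in which each agent ranks the next one first (worth `3`) and the previous one second (worth `2`).
The pair `{i, i + 1}` blocks unless `i` gets `3` or `i + 1` gets at least `2`. If some `i` got
`3`, then `i + 1` would get `2`, forcing `i + 2` to get `3` and hence `i + 3 = i` to get `2`;
so nobody gets `3`, and then every agent of the cycle needs `2`, i.e. a predecessor getting `3`. -/

theorem Equiv.Perm.apply_apply_eq_self_of_card_le_two {α : Type*} [DecidableEq α]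
    {μ : Equiv.Perm α} {S : Finset α} (hμS : ∀ x ∈ S, μ x ∈ S) (hS : S.card ≤ 2)
    {a : α} (ha : a ∈ S) : μ (μ a) = a := by
  by_contra hμμ
  have hμa : μ a ≠ a := fun h => hμμ (by rw [h, h])
  have hsub : {a, μ a, μ (μ a)} ⊆ S := by
    simp only [Finset.insert_subset_iff, Finset.singleton_subset_iff]
    exact ⟨ha, hμS _ ha, hμS _ (hμS _ ha)⟩
  have hcard : ({a, μ a, μ (μ a)} : Finset α).card = 3 :=
    Finset.card_eq_three.mpr
      ⟨_, _, _, hμa.symm, Ne.symm hμμ, fun h => hμa (μ.injective h).symm, rfl⟩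
  have := Finset.card_le_card hsub
  omega

theorem swap_mem_C0_pair {α : Type*} [DecidableEq α] [Fintype α] {a b : α} (hab : a ≠ b) :
    Equiv.swap a b ∈ C0 {a, b} := by
  refine ⟨?_, fun T ⟨x, hxT⟩ hT hswapT => ?_⟩
  · simp only [Finset.image_insert, Finset.image_singleton, Equiv.swap_apply_left,
      Equiv.swap_apply_right, Finset.pair_comm]
  -- `T` contains some `x ∈ {a, b}` and, being swap-invariant, also the other one.
  have hswapx : Equiv.swap a b x ∈ T := hswapT ▸ Finset.mem_image_of_mem _ hxT
  refine hT.not_subset fun y hy => ?_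
  rcases Finset.mem_insert.mp (hT.subset hxT) with rfl | hx <;>
    rcases Finset.mem_insert.mp hy with rfl | hy
  all_goals simp_all

theorem IsOutcome.exists_partner {f : Finset (Finset (Fin 4))} {v : Fin 4 → ℝ}
    (h : IsOutcome Fgs f v) (a : Fin 4) : ∃ b, v a = u a b ∧ v b = u b a := by
  obtain ⟨-, -, hcover, hnonneg, hfeasible⟩ := h
  obtain ⟨S, hSf, haS⟩ := hcover a
  have hS := hfeasible S hSf
  by_cases hcard : S.card = 1 ∨ S.card = 2
  · rw [Fgs, if_pos hcard] at hS
    obtain ⟨μ, hμ, hvμ⟩ := hS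
    have hμS : ∀ x ∈ S, μ x ∈ S := fun x hx => hμ.1 ▸ Finset.mem_image_of_mem _ hx
    refine ⟨μ a, hvμ ⟨a, haS⟩, ?_⟩
    have hμμ := μ.apply_apply_eq_self_of_card_le_two hμS (by omega) haS
    simpa only [hμμ] using hvμ ⟨μ a, hμS a haS⟩
  · rw [Fgs, if_neg hcard, Set.mem_singleton_iff] at hS
    have := congrFun hS ⟨a, haS⟩
    linarith [hnonneg a]

theorem blocks_pair {v : Fin 4 → ℝ} {a b : Fin 4} (hab : a ≠ b)
    (ha : v a < u a b) (hb : v b < u b a) : Blocks Fgs {a, b} v := by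
  refine ⟨Finset.insert_nonempty _ _, fun p => u p.1 (Equiv.swap a b p.1), ?_, ?_⟩
  · rw [Fgs, if_pos (Or.inr (Finset.card_pair hab))]
    exact ⟨Equiv.swap a b, swap_mem_C0_pair hab, fun p => rfl⟩
  · rintro ⟨p, hp⟩
    rcases Finset.mem_insert.mp hp with rfl | hp
    · simpa using ha
    · obtain rfl := Finset.mem_singleton.mp hp
      simpa using hb

theorem u_castSucc_succ (i : Fin 3) : u i.castSucc (i + 1).castSucc = 3 := by
  fin_cases i <;> rfl

theorem u_succ_castSucc (i : Fin 3) : u (i + 1).castSucc i.castSucc = 2 := by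
  fin_cases i <;> rfl

theorem eq_succ_or_eq_pred_of_two_le_u {i : Fin 3} {b : Fin 4} (h : 2 ≤ u i.castSucc b) :
    b = (i + 1).castSucc ∨ b = (i - 1).castSucc := by
  revert h
  fin_cases i <;> fin_cases b <;> norm_num [u] <;> decide

section Cycle

variable {f : Finset (Finset (Fin 4))} {v : Fin 4 → ℝ}

theorem IsOutcome.succ_eq_two (h : IsOutcome Fgs f v) {i : Fin 3} (hi : 3 ≤ v i.castSucc) :
    v (i + 1).castSucc = 2 := by
  obtain ⟨b, hab, hba⟩ := h.exists_partner i.castSucc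
  rcases eq_succ_or_eq_pred_of_two_le_u (hab ▸ hi.trans' (by norm_num)) with rfl | rfl
  · rw [hba, u_succ_castSucc]
  · have : u i.castSucc (i - 1).castSucc = 2 := by simpa using u_succ_castSucc (i - 1)
    linarith

theorem IsOutcome.three_le_or_three_le_pred (h : IsOutcome Fgs f v) {i : Fin 3}
    (hi : 2 ≤ v (i + 1).castSucc) : 3 ≤ v (i + 1).castSucc ∨ 3 ≤ v i.castSucc := by
  obtain ⟨b, hab, hba⟩ := h.exists_partner (i + 1).castSucc
  rcases eq_succ_or_eq_pred_of_two_le_u (hab ▸ hi) with rfl | rfl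
  · exact .inl (by rw [hab, u_castSucc_succ])
  · simp only [add_sub_cancel_right] at hba
    exact .inr (by rw [hba, u_castSucc_succ])

theorem blocks_succ {i : Fin 3} (hi : v i.castSucc < 3) (hsucc : v (i + 1).castSucc < 2) :
    Blocks Fgs {i.castSucc, (i + 1).castSucc} v :=
  blocks_pair (by fin_cases i <;> decide) (u_castSucc_succ i ▸ hi) (u_succ_castSucc i ▸ hsucc)

end Cycle

/-- **Example 1 (Gale–Shapley).** The four-agent room-mates problem above has an empty
core: every outcome admits a blocking coalition. -/
theorem gale_shapley_core_empty :
    ∀ (f : Finset (Finset (Fin 4))) (v : Fin 4 → ℝ),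
      IsOutcome Fgs f v → ∃ S : Finset (Fin 4), Blocks Fgs S v := by
  intro f v hv
  by_contra! hcore
  have hunblocked (i : Fin 3) (hi : v i.castSucc < 3) : 2 ≤ v (i + 1).castSucc :=
    not_lt.mp fun hsucc => hcore _ (blocks_succ hi hsucc)
  have hlt (i : Fin 3) : v i.castSucc < 3 := by
    by_contra! hi
    have hsucc := hv.succ_eq_two hi
    have hsucc₂ : 3 ≤ v (i + 1 + 1).castSucc :=
      (hv.three_le_or_three_le_pred (hunblocked _ (by linarith))).resolve_right (by linarith)
    have hsucc₃ := hv.succ_eq_two hsucc₂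
    rw [show i + 1 + 1 + 1 = i by fin_cases i <;> rfl] at hsucc₃
    linarith
  rcases hv.three_le_or_three_le_pred (hunblocked 0 (hlt 0)) with h | h
  exacts [(hlt _).not_ge h, (hlt 0).not_ge h]
end

section
/- For the four-agent contract choice problem G* defined below (the Gale–Shapley example with coalitions of size up to three allowed to match), the outcome (f*, v*) with f* = {{1,2,3},{4}}, v*(1) = v*(2) = v*(3) = 3 and v*(4) = 0 belongs to the core of G*. -/
/-- The feasible pay-off sets of the modified example `G*`: for coalitions of size 1, 2
or 3, the pay-offs induced by reallocations `μ ∈ C⁰(S)`; otherwise the single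
vector `-e^S`. -/
def Fstar (S : Finset (Fin 4)) : Set ({a : Fin 4 // a ∈ S} → ℝ) :=
  if S.card = 1 ∨ S.card = 2 ∨ S.card = 3 then
    {x | ∃ μ ∈ C0 S, ∀ a : {a : Fin 4 // a ∈ S}, x a = u a.1 (μ a.1)}
  else
    {fun _ => -1}

/-- The coalition structure `f* = {{1,2,3},{4}}` of the paper (zero-indexed). -/
def fstar : Finset (Finset (Fin 4)) :=
  {({0, 1, 2} : Finset (Fin 4)), ({3} : Finset (Fin 4))}

/-- The pay-off function `v*(1)=v*(2)=v*(3)=3, v*(4)=0` of the paper (zero-indexed). -/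
def vstar : Fin 4 → ℝ := ![3, 3, 3, 0]

/-! Every contract pays an agent at most 3 and `v*` already pays 3 to agents 1, 2, 3, so
a blocking coalition can contain only agent 4; but the only contract of `{4}` is the
trivial one, which pays 0 = `v*(4)`. -/

lemma not_blocks_of_forall_le {α : Type*} {F : (S : Finset α) → Set ({a : α // a ∈ S} → ℝ)}
    {S : Finset α} {v : α → ℝ} {a : α} (ha : a ∈ S) (h : ∀ x ∈ F S, x ⟨a, ha⟩ ≤ v a) :
    ¬ Blocks F S v :=
  fun ⟨_, x, hx, hlt⟩ => (h x hx).not_gt (hlt ⟨a, ha⟩)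

lemma mem_C0_singleton_iff {α : Type*} [DecidableEq α] [Fintype α] {μ : Equiv.Perm α}
    {a : α} : μ ∈ C0 {a} ↔ μ a = a := by
  simp only [C0, Set.mem_ofPred_eq, Finset.image_singleton, Finset.singleton_inj,
    and_iff_left_iff_imp]
  intro _ T hT hTa
  exact absurd (Finset.subset_singleton_iff.mp hTa.subset) (by simp [hT.ne_empty, hTa.ne])

lemma u_le_three (a b : Fin 4) : u a b ≤ 3 := by
  fin_cases a <;> fin_cases b <;> norm_num [u]

lemma u_self (a : Fin 4) : u a a = 0 := by
  fin_cases a <;> rfl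

lemma le_three_of_mem_Fstar {S : Finset (Fin 4)} {x : {a // a ∈ S} → ℝ} (hx : x ∈ Fstar S)
    (a : {a // a ∈ S}) : x a ≤ 3 := by
  unfold Fstar at hx
  split_ifs at hx
  · obtain ⟨μ, -, hxμ⟩ := hx
    exact hxμ a ▸ u_le_three _ _
  · rw [Set.mem_singleton_iff.mp hx]
    norm_num

lemma eq_zero_of_mem_Fstar_singleton {a : Fin 4} {x : {b // b ∈ ({a} : Finset (Fin 4))} → ℝ}
    (hx : x ∈ Fstar {a}) : x ⟨a, Finset.mem_singleton_self a⟩ = 0 := by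
  rw [Fstar, if_pos (by simp)] at hx
  obtain ⟨μ, hμ, hxμ⟩ := hx
  rw [hxμ, mem_C0_singleton_iff.mp hμ, u_self]

def cycle012 : Equiv.Perm (Fin 4) :=
  ⟨![1, 2, 0, 3], ![2, 0, 1, 3], by decide, by decide⟩

lemma cycle012_mem_C0 : cycle012 ∈ C0 ({0, 1, 2} : Finset (Fin 4)) :=
  ⟨by decide, by decide⟩

lemma isOutcome_fstar_vstar : IsOutcome Fstar fstar vstar := by
  refine ⟨by decide, by decide, by decide, fun a => by fin_cases a <;> norm_num [vstar], ?_⟩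
  simp only [fstar, Finset.mem_insert, Finset.mem_singleton, forall_eq_or_imp, forall_eq]
  constructor
  · rw [Fstar, if_pos (by decide)]
    refine ⟨cycle012, cycle012_mem_C0, ?_⟩
    rintro ⟨a, ha⟩
    fin_cases ha <;> simp [vstar, u, cycle012]
  · rw [Fstar, if_pos (by decide)]
    refine ⟨Equiv.refl _, mem_C0_singleton_iff.mpr rfl, ?_⟩
    rintro ⟨a, ha⟩
    obtain rfl := Finset.mem_singleton.mp ha
    rfl

/-- The outcome `(f*, v*)` with `f* = {{1,2,3},{4}}` and `v* = (3,3,3,0)` belongs to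
the core of `G*`: it is an outcome and no coalition blocks it. -/
theorem outcome_in_core_of_Gstar :
    IsOutcome Fstar fstar vstar ∧ ∀ S : Finset (Fin 4), ¬ Blocks Fstar S vstar := by
  refine ⟨isOutcome_fstar_vstar, fun S hS => ?_⟩
  by_cases h : ∃ a ∈ S, a ≠ 3
  · obtain ⟨a, ha, ha3⟩ := h
    have hva : vstar a = 3 := by fin_cases a <;> simp_all [vstar]
    exact not_blocks_of_forall_le ha (fun x hx => hva ▸ le_three_of_mem_Fstar hx _) hS
  · have hS3 : S = {3} := by
      push Not at h
      exact Finset.eq_singleton_iff_unique_mem.mpr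
        ⟨by obtain ⟨b, hb⟩ := hS.1; exact h b hb ▸ hb, h⟩
    subst hS3
    exact not_blocks_of_forall_le (Finset.mem_singleton_self 3)
      (fun x hx => (eq_zero_of_mem_Fstar_singleton hx).le) hS
end
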